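/- arXiv:2504.03058 — 2 statements merged into one kernel-verified Lean document; each statement's English description precedes it below -/
import Mathlib

section
/- Let X be a real Banach space, R > 0, χ̄ ∈ X, and let F be a map from X to X that is twice continuously Fréchet differentiable on the closed ball B_R(χ̄) of radius R centered at χ̄. Let A : X → X be an injective bounded linear operator. Suppose there exist constants Y ≥ 0, Z₁ ≥ 0 and Z₂ > 0 such that ‖A(F(χ̄))‖ ≤ Y, ‖A ∘ DF(χ̄) − I‖ ≤ Z₁ (operator norm), and ‖A ∘ D²F(χ)‖ ≤ Z₂ for all χ ∈ B_R(χ̄). If 2·Y·Z₂ ≤ (1 − Z₁)² and Z₁ < 1, then for every r > 0 satisfying (1 − Z₁ − √((1 − Z₁)² − 2·Y·Z₂))/Z₂ ≤ r < min((1 − Z₁)/Z₂, R), there exists a unique χ̃ in the closed ball B_r(χ̄) with F(χ̃) = 0. -/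
/-!
The map `T χ = χ - A (F χ)` has exactly the zeros of `F` as fixed points, and its derivative
`I - A ∘ DF` has norm at most `Z₁` at `χ̄` and is `Z₂`-Lipschitz. A second-order Taylor estimate then
gives `‖T χ - χ̄‖ ≤ Y + Z₁ r + Z₂ r² / 2 ≤ r` on `B_r(χ̄)`, the last step being the nonpositivity
of the radii polynomial `Z₂ r² / 2 - (1 - Z₁) r + Y` between its roots, while the mean value
inequality makes `T` a contraction with constant `Z₁ + Z₂ r < 1` there. Banach's fixed point
theorem concludes.
-/

open Set Metric Function NNReal

lemma radii_polynomial_nonpos {Y Z₁ Z₂ r : ℝ} (hZ₂ : 0 < Z₂)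
    (hdisc : 2 * Y * Z₂ ≤ (1 - Z₁) ^ 2)
    (hlow : (1 - Z₁ - √((1 - Z₁) ^ 2 - 2 * Y * Z₂)) / Z₂ ≤ r) (hhigh : Z₂ * r ≤ 1 - Z₁) :
    Z₂ / 2 * r ^ 2 - (1 - Z₁) * r + Y ≤ 0 := by
  set s := √((1 - Z₁) ^ 2 - 2 * Y * Z₂)
  have hs : s ^ 2 = (1 - Z₁) ^ 2 - 2 * Y * Z₂ := Real.sq_sqrt (by linarith)
  have above_root : 0 ≤ Z₂ * r - (1 - Z₁) + s := by
    rw [div_le_iff₀ hZ₂] at hlow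
    linarith
  have below_root : 0 ≤ (1 - Z₁) + s - Z₂ * r := by
    linarith [Real.sqrt_nonneg ((1 - Z₁) ^ 2 - 2 * Y * Z₂)]
  -- the polynomial is `-(Z₂ / 2) (r - r₋) (r₊ - r)` with roots `r± = (1 - Z₁ ± s) / Z₂`
  nlinarith [mul_nonneg above_root below_root]

theorem Convex.norm_image_sub_sub_fderiv_le_of_lipschitz {E G : Type*}
    [NormedAddCommGroup E] [NormedSpace ℝ E] [NormedAddCommGroup G] [NormedSpace ℝ G]
    {s : Set E} (hs : Convex ℝ s) {f : E → G} {f' : E → E →L[ℝ] G}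
    (hf : ∀ z ∈ s, HasFDerivWithinAt f (f' z) s z) {L : ℝ} {x y : E} (hx : x ∈ s) (hy : y ∈ s)
    (hlip : ∀ z ∈ s, ‖f' z - f' x‖ ≤ L * ‖z - x‖) :
    ‖f y - f x - f' x (y - x)‖ ≤ L / 2 * ‖y - x‖ ^ 2 := by
  set g : ℝ → E := ⇑(AffineMap.lineMap x y : ℝ →ᵃ[ℝ] E)
  have hg : MapsTo g (Icc 0 1) s := hs.mapsTo_lineMap hx hy
  set φ : ℝ → G := fun t => f (g t) - f x - t • f' x (y - x)
  have hφ : ∀ t ∈ Icc (0 : ℝ) 1,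
      HasDerivWithinAt φ (f' (g t) (y - x) - f' x (y - x)) (Icc 0 1) t := fun t ht =>
    (((hf (g t) (hg ht)).comp_hasDerivWithinAt t AffineMap.hasDerivWithinAt_lineMap hg).sub_const
      (f x)).sub (by simpa using (hasDerivWithinAt_id t _).smul_const (f' x (y - x)))
  have hB : ∀ t, HasDerivAt (fun t => L / 2 * ‖y - x‖ ^ 2 * t ^ 2) (L * ‖y - x‖ ^ 2 * t) t :=
    fun t => ((hasDerivAt_pow 2 t).const_mul _).congr_deriv (by ring)
  have hφ' : ∀ t ∈ Ico (0 : ℝ) 1, ‖f' (g t) (y - x) - f' x (y - x)‖ ≤ L * ‖y - x‖ ^ 2 * t := by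
    intro t ht
    have hgt : ‖g t - x‖ = t * ‖y - x‖ := by
      simp [g, AffineMap.lineMap_apply, norm_smul, abs_of_nonneg ht.1]
    calc ‖f' (g t) (y - x) - f' x (y - x)‖ ≤ ‖f' (g t) - f' x‖ * ‖y - x‖ :=
          (f' (g t) - f' x).le_opNorm (y - x)
      _ ≤ L * ‖g t - x‖ * ‖y - x‖ := by
          gcongr; exact hlip _ (hg (Ico_subset_Icc_self ht))
      _ = L * ‖y - x‖ ^ 2 * t := by rw [hgt]; ring
  have key := image_norm_le_of_norm_deriv_right_le_deriv_boundary
    (fun t ht => (hφ t ht).continuousWithinAt)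
    (fun t ht => (hφ t (Ico_subset_Icc_self ht)).mono_of_mem_nhdsWithin (Icc_mem_nhdsGE_of_mem ht))
    (by simp [φ, g]) hB hφ' (right_mem_Icc.2 zero_le_one)
  simpa [φ, g] using key

theorem existsUnique_isFixedPt_of_mapsTo_of_lipschitzOnWith {α : Type*} [MetricSpace α]
    {f : α → α} {s : Set α} {K : ℝ≥0} (hsc : IsComplete s) (hne : s.Nonempty)
    (hsf : MapsTo f s s) (hK : K < 1) (hf : LipschitzOnWith K f s) :
    ∃! x, x ∈ s ∧ IsFixedPt f x := by
  obtain ⟨x₀, hx₀⟩ := hne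
  have hcontr : ContractingWith K (hsf.restrict f s s) := ⟨hK, fun x y => hf x.2 y.2⟩
  obtain ⟨y, hys, hy, -⟩ := hcontr.exists_fixedPoint' hsc hsf hx₀ (edist_ne_top _ _)
  refine ⟨y, ⟨hys, hy⟩, fun z ⟨hzs, hz⟩ => ?_⟩
  exact congrArg Subtype.val
    (hcontr.fixedPoint_unique' (x := ⟨z, hzs⟩) (y := ⟨y, hys⟩) (Subtype.ext hz) (Subtype.ext hy))

section RadiiPolynomial

variable {E : Type*} [NormedAddCommGroup E] [NormedSpace ℝ E]
  {T : E → E} {T' : E → E →L[ℝ] E} {x₀ : E} {r Y Z₁ Z₂ : ℝ}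

theorem mapsTo_closedBall_of_radii_polynomial_nonpos
    (hT : ∀ x ∈ closedBall x₀ r, HasFDerivWithinAt T (T' x) (closedBall x₀ r) x)
    (hY : ‖T x₀ - x₀‖ ≤ Y) (hZ₁ : ‖T' x₀‖ ≤ Z₁) (hZ₂ : 0 ≤ Z₂)
    (hT' : ∀ x ∈ closedBall x₀ r, ‖T' x - T' x₀‖ ≤ Z₂ * ‖x - x₀‖)
    (hp : Z₂ / 2 * r ^ 2 - (1 - Z₁) * r + Y ≤ 0) :
    MapsTo T (closedBall x₀ r) (closedBall x₀ r) := by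
  intro x hx
  have hx₀ : x₀ ∈ closedBall x₀ r := mem_closedBall_self (dist_nonneg.trans hx)
  have hxr : ‖x - x₀‖ ≤ r := mem_closedBall_iff_norm.1 hx
  have taylor := (convex_closedBall x₀ r).norm_image_sub_sub_fderiv_le_of_lipschitz hT hx₀ hx hT'
  have linear : ‖T' x₀ (x - x₀)‖ ≤ Z₁ * r :=
    ((T' x₀).le_opNorm _).trans (mul_le_mul hZ₁ hxr (norm_nonneg _) ((norm_nonneg _).trans hZ₁))
  have quadratic : Z₂ / 2 * ‖x - x₀‖ ^ 2 ≤ Z₂ / 2 * r ^ 2 := by gcongr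
  rw [mem_closedBall_iff_norm]
  calc ‖T x - x₀‖ = ‖(T x - T x₀ - T' x₀ (x - x₀)) + T' x₀ (x - x₀) + (T x₀ - x₀)‖ := by
        congr 1; abel
    _ ≤ ‖T x - T x₀ - T' x₀ (x - x₀)‖ + ‖T' x₀ (x - x₀)‖ + ‖T x₀ - x₀‖ := norm_add₃_le
    _ ≤ r := by linarith

theorem lipschitzOnWith_closedBall_of_norm_fderiv_sub_le
    (hT : ∀ x ∈ closedBall x₀ r, HasFDerivWithinAt T (T' x) (closedBall x₀ r) x)
    (hZ₁ : ‖T' x₀‖ ≤ Z₁) (hZ₂ : 0 ≤ Z₂)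
    (hT' : ∀ x ∈ closedBall x₀ r, ‖T' x - T' x₀‖ ≤ Z₂ * ‖x - x₀‖) :
    LipschitzOnWith (Z₁ + Z₂ * r).toNNReal T (closedBall x₀ r) := by
  refine (convex_closedBall x₀ r).lipschitzOnWith_of_nnnorm_hasFDerivWithin_le hT fun x hx => ?_
  rw [← NNReal.coe_le_coe, coe_nnnorm]
  refine le_trans ?_ (Real.le_coe_toNNReal _)
  calc ‖T' x‖ ≤ ‖T' x₀‖ + ‖T' x - T' x₀‖ := norm_le_norm_add_norm_sub' _ _
    _ ≤ Z₁ + Z₂ * r := by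
        gcongr
        exact (hT' x hx).trans (by gcongr; exact mem_closedBall_iff_norm.1 hx)

theorem existsUnique_isFixedPt_of_radii_polynomial_nonpos [CompleteSpace E]
    (hT : ∀ x ∈ closedBall x₀ r, HasFDerivWithinAt T (T' x) (closedBall x₀ r) x)
    (hY : ‖T x₀ - x₀‖ ≤ Y) (hZ₁ : ‖T' x₀‖ ≤ Z₁) (hZ₂ : 0 ≤ Z₂)
    (hT' : ∀ x ∈ closedBall x₀ r, ‖T' x - T' x₀‖ ≤ Z₂ * ‖x - x₀‖)
    (hr : 0 ≤ r) (hp : Z₂ / 2 * r ^ 2 - (1 - Z₁) * r + Y ≤ 0) (hK : Z₁ + Z₂ * r < 1) :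
    ∃! x, x ∈ closedBall x₀ r ∧ IsFixedPt T x := by
  have hK₀ : 0 ≤ Z₁ + Z₂ * r := add_nonneg ((norm_nonneg _).trans hZ₁) (mul_nonneg hZ₂ hr)
  exact existsUnique_isFixedPt_of_mapsTo_of_lipschitzOnWith isClosed_closedBall.isComplete
    (nonempty_closedBall.2 hr) (mapsTo_closedBall_of_radii_polynomial_nonpos hT hY hZ₁ hZ₂ hT' hp)
    (by rwa [← NNReal.coe_lt_one, Real.coe_toNNReal _ hK₀])
    (lipschitzOnWith_closedBall_of_norm_fderiv_sub_le hT hZ₁ hZ₂ hT')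

end RadiiPolynomial

theorem isFixedPt_sub_iff_eq_zero {E 𝓕 : Type*} [AddCommGroup E] [FunLike 𝓕 E E]
    [AddMonoidHomClass 𝓕 E E] {F : E → E} {A : 𝓕}
    (hA : Injective A) {x : E} : IsFixedPt (fun x => x - A (F x)) x ↔ F x = 0 := by
  rw [IsFixedPt, sub_eq_self, map_eq_zero_iff A hA]

theorem newton_kantorovich_general
    {X : Type*} [NormedAddCommGroup X] [NormedSpace ℝ X] [CompleteSpace X]
    (R : ℝ) (χb : X) (F : X → X)
    (F' : X → X →L[ℝ] X) (F'' : X → X →L[ℝ] X →L[ℝ] X)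
    (hF' : ∀ χ ∈ Metric.closedBall χb R,
      HasFDerivWithinAt F (F' χ) (Metric.closedBall χb R) χ)
    (hF'' : ∀ χ ∈ Metric.closedBall χb R,
      HasFDerivWithinAt F' (F'' χ) (Metric.closedBall χb R) χ)
    (A : X →L[ℝ] X) (hA : Function.Injective A)
    (Y Z₁ Z₂ : ℝ) (hZ₂ : 0 < Z₂)
    (hbY : ‖A (F χb)‖ ≤ Y)
    (hbZ₁ : ‖A.comp (F' χb) - ContinuousLinearMap.id ℝ X‖ ≤ Z₁)
    (hbZ₂ : ∀ χ ∈ Metric.closedBall χb R,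
      ‖(ContinuousLinearMap.compL ℝ X X X A).comp (F'' χ)‖ ≤ Z₂)
    (hcond₁ : 2 * Y * Z₂ ≤ (1 - Z₁) ^ 2) (hcond₂ : Z₁ < 1)
    (r : ℝ)
    (hr₁ : (1 - Z₁ - Real.sqrt ((1 - Z₁) ^ 2 - 2 * Y * Z₂)) / Z₂ ≤ r)
    (hr₂ : r < min ((1 - Z₁) / Z₂) R) :
    ∃! χt : X, χt ∈ Metric.closedBall χb r ∧ F χt = 0 := by
  obtain ⟨hrZ, hrR⟩ := lt_min_iff.1 hr₂
  rw [lt_div_iff₀' hZ₂] at hrZ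
  have hp := radii_polynomial_nonpos hZ₂ hcond₁ hr₁ hrZ.le
  have hr : 0 ≤ r := by nlinarith [(norm_nonneg _).trans hbY]
  have hBr : closedBall χb r ⊆ closedBall χb R := closedBall_subset_closedBall hrR.le
  have hAF' : ∀ χ ∈ closedBall χb r, ‖A.comp (F' χ) - A.comp (F' χb)‖ ≤ Z₂ * ‖χ - χb‖ :=
    fun χ hχ => (convex_closedBall χb R).norm_image_sub_le_of_norm_hasFDerivWithin_le
      (fun x hx => ((ContinuousLinearMap.compL ℝ X X X A).hasFDerivAt.comp_hasFDerivWithinAt x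
        (hF'' x hx))) hbZ₂ (hBr (mem_closedBall_self hr)) (hBr hχ)
  have hT : ∀ χ ∈ closedBall χb r, HasFDerivWithinAt (fun χ => χ - A (F χ))
      (ContinuousLinearMap.id ℝ X - A.comp (F' χ)) (closedBall χb r) χ := fun χ hχ =>
    (hasFDerivWithinAt_id χ _).sub
      (A.hasFDerivAt.comp_hasFDerivWithinAt χ ((hF' χ (hBr hχ)).mono hBr))
  have hfix := existsUnique_isFixedPt_of_radii_polynomial_nonpos hT
    (by simpa using hbY) (by rwa [← norm_neg, neg_sub]) hZ₂.le
    (fun χ hχ => by rw [sub_sub_sub_cancel_left, norm_sub_rev]; exact hAF' χ hχ) hr hp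
    (by linarith)
  simpa only [isFixedPt_sub_iff_eq_zero hA] using hfix

/-- Newton–Kantorovich type theorem (Theorem 2.1 of the paper).
`F` is twice continuously Fréchet differentiable on the closed ball of radius `R`
centered at `χb`, with first derivative `F'` and second derivative `F''` there. -/
theorem newton_kantorovich
    {X : Type*} [NormedAddCommGroup X] [NormedSpace ℝ X] [CompleteSpace X]
    (R : ℝ) (hR : 0 < R) (χb : X) (F : X → X)
    (F' : X → X →L[ℝ] X) (F'' : X → X →L[ℝ] X →L[ℝ] X)
    (hF' : ∀ χ ∈ Metric.closedBall χb R,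
      HasFDerivWithinAt F (F' χ) (Metric.closedBall χb R) χ)
    (hF'' : ∀ χ ∈ Metric.closedBall χb R,
      HasFDerivWithinAt F' (F'' χ) (Metric.closedBall χb R) χ)
    (hF''cont : ContinuousOn F'' (Metric.closedBall χb R))
    (A : X →L[ℝ] X) (hA : Function.Injective A)
    (Y Z₁ Z₂ : ℝ) (hY : 0 ≤ Y) (hZ₁ : 0 ≤ Z₁) (hZ₂ : 0 < Z₂)
    (hbY : ‖A (F χb)‖ ≤ Y)
    (hbZ₁ : ‖A.comp (F' χb) - ContinuousLinearMap.id ℝ X‖ ≤ Z₁)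
    (hbZ₂ : ∀ χ ∈ Metric.closedBall χb R,
      ‖(ContinuousLinearMap.compL ℝ X X X A).comp (F'' χ)‖ ≤ Z₂)
    (hcond₁ : 2 * Y * Z₂ ≤ (1 - Z₁) ^ 2) (hcond₂ : Z₁ < 1)
    (r : ℝ) (hr₀ : 0 < r)
    (hr₁ : (1 - Z₁ - Real.sqrt ((1 - Z₁) ^ 2 - 2 * Y * Z₂)) / Z₂ ≤ r)
    (hr₂ : r < min ((1 - Z₁) / Z₂) R) :
    ∃! χt : X, χt ∈ Metric.closedBall χb r ∧ F χt = 0 :=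
  newton_kantorovich_general R χb F F' F'' hF' hF'' A hA Y Z₁ Z₂ hZ₂ hbY hbZ₁ hbZ₂ hcond₁ hcond₂ r
    hr₁ hr₂
end

section
/- Let ν > 1, N ∈ ℕ, r > 0, and let (a_n)_{n≥0}, (b_n)_{n≥0} be real sequences such that ∑_{n≥0} |a_n|·ν^n < ∞, b_n = 0 for all n > N, and ∑_{n≥0} |a_n − b_n|·ν^n ≤ r. Then for every θ ∈ (0, π): |∑_{n≥1} n·a_n·sin(n·θ) − ∑_{n=1}^{N} n·b_n·sin(n·θ)| ≤ r·( ∑_{n=1}^{N} n·|sin(n·θ)| + ((ν − 1)·N + ν) / ((ν − 1)²·ν^N) ). -/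
/-!
Put `c = a - b`. Since `b` vanishes beyond `N`, the `b`-part of the derivative series is exactly
the finite sum, so the quantity to bound is `|∑ n c_n sin (n θ)|`. The weighted bound gives
`|c_n| ≤ r ν⁻ⁿ ≤ r`: the terms with `n ≤ N` are bounded by `r n |sin (n θ)|`, the others by
`r n ν⁻ⁿ`, and the tail `∑_{n > N} n ν⁻ⁿ` is evaluated with the geometric series and its
derivative.
-/

open Finset

theorem sum_Icc_one_eq_sum_range_succ {M : Type*} [AddCommMonoid M] (f : ℕ → M) (N : ℕ) :
    ∑ n ∈ Icc 1 N, f n = ∑ n ∈ range N, f (n + 1) := by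
  rw [range_eq_Ico, sum_Ico_add']
  rfl

theorem norm_tsum_le_sum_range_add_of_hasSum {E : Type*} [SeminormedAddCommGroup E]
    {u : ℕ → E} {p q : ℕ → ℝ} {Q : ℝ} (N : ℕ) (hp : ∀ n < N, ‖u n‖ ≤ p n)
    (hq : ∀ n, ‖u (n + N)‖ ≤ q n) (hQ : HasSum q Q) :
    ‖∑' n, u n‖ ≤ ∑ n ∈ range N, p n + Q := by
  have hu : Summable fun n => ‖u n‖ :=
    (summable_nat_add_iff N).mp (hQ.summable.of_nonneg_of_le (fun _ => norm_nonneg _) hq)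
  calc ‖∑' n, u n‖ ≤ ∑' n, ‖u n‖ := norm_tsum_le_tsum_norm hu
    _ = ∑ n ∈ range N, ‖u n‖ + ∑' n, ‖u (n + N)‖ := (hu.sum_add_tsum_nat_add N).symm
    _ ≤ ∑ n ∈ range N, p n + Q :=
      add_le_add (sum_le_sum fun n hn => hp n (mem_range.mp hn))
        (hasSum_le hq ((summable_nat_add_iff N).mpr hu).hasSum hQ)

-- With `x = ν⁻¹` the terms are `x ^ (N + 1) * (n * x ^ n) + (N + 1) * x ^ (N + 1) * x ^ n`.
theorem hasSum_nat_div_pow_tail {ν : ℝ} (hν : 1 < ν) (N : ℕ) :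
    HasSum (fun n : ℕ => ((n + N + 1 : ℕ) : ℝ) / ν ^ (n + N + 1))
      (((ν - 1) * N + ν) / ((ν - 1) ^ 2 * ν ^ N)) := by
  have hν0 : 0 < ν := one_pos.trans hν
  have hx0 : 0 ≤ ν⁻¹ := inv_nonneg.mpr hν0.le
  have hx1 : ν⁻¹ < 1 := inv_lt_one_of_one_lt₀ hν
  have hx : ‖ν⁻¹‖ < 1 := by rwa [Real.norm_of_nonneg hx0]
  have hsum := ((hasSum_coe_mul_geometric_of_norm_lt_one hx).mul_left (ν⁻¹ ^ (N + 1))).add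
    ((hasSum_geometric_of_lt_one hx0 hx1).mul_left ((N + 1) * ν⁻¹ ^ (N + 1)))
  have hν1 : ν - 1 ≠ 0 := by linarith
  convert! hsum.congr_fun (g := fun n : ℕ => ((n + N + 1 : ℕ) : ℝ) / ν ^ (n + N + 1)) fun n => ?_
    using 1
  all_goals
    simp only [inv_pow]
    field_simp
    push_cast
    ring

section WeightedCoefficients

variable {ν r : ℝ} {c s : ℕ → ℝ}

theorem abs_le_div_pow_of_tsum_le (hν : 0 < ν) (hc : Summable fun n => |c n| * ν ^ n)
    (hcr : ∑' n, |c n| * ν ^ n ≤ r) (n : ℕ) : |c n| ≤ r / ν ^ n := by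
  rw [le_div_iff₀ (pow_pos hν n)]
  exact (hc.le_tsum n fun _ _ => by positivity).trans hcr

theorem abs_nat_mul_mul_le_div_pow (hν : 0 < ν) (hs : ∀ n, |s n| ≤ 1)
    (hc : Summable fun n => |c n| * ν ^ n) (hcr : ∑' n, |c n| * ν ^ n ≤ r) (m : ℕ) :
    |(m : ℝ) * c m * s m| ≤ r * (m / ν ^ m) := by
  have hr : 0 ≤ r / ν ^ m := (abs_nonneg _).trans (abs_le_div_pow_of_tsum_le hν hc hcr m)
  calc |(m : ℝ) * c m * s m| = m * |c m| * |s m| := by simp [abs_mul]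
    _ ≤ m * (r / ν ^ m) * 1 := by
      gcongr
      exacts [abs_le_div_pow_of_tsum_le hν hc hcr m, hs m]
    _ = r * (m / ν ^ m) := by ring

theorem summable_nat_mul_mul (hν : 1 < ν) (hs : ∀ n, |s n| ≤ 1)
    (hc : Summable fun n => |c n| * ν ^ n) : Summable fun n : ℕ => (n : ℝ) * c n * s n := by
  have hdom : Summable fun n : ℕ => (n : ℝ) / ν ^ n :=
    (summable_nat_add_iff 1).mp (hasSum_nat_div_pow_tail hν 0).summable
  exact (hdom.mul_left _).of_norm_bounded
    (abs_nat_mul_mul_le_div_pow (one_pos.trans hν) hs hc le_rfl)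

theorem abs_nat_mul_mul_le_mul_abs (hν : 1 ≤ ν) (hc : Summable fun n => |c n| * ν ^ n)
    (hcr : ∑' n, |c n| * ν ^ n ≤ r) (m : ℕ) : |(m : ℝ) * c m * s m| ≤ r * (m * |s m|) := by
  have hcm := abs_le_div_pow_of_tsum_le (one_pos.trans_le hν) hc hcr m
  have hr : 0 ≤ r := by
    simpa using (abs_nonneg _).trans (abs_le_div_pow_of_tsum_le (one_pos.trans_le hν) hc hcr 0)
  calc |(m : ℝ) * c m * s m| = m * |c m| * |s m| := by simp [abs_mul]
    _ ≤ m * r * |s m| := by gcongr; exact hcm.trans (div_le_self hr (one_le_pow₀ hν))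
    _ = r * (m * |s m|) := by ring

theorem abs_tsum_nat_mul_mul_le (hν : 1 < ν) (N : ℕ) (hs : ∀ n, |s n| ≤ 1)
    (hc : Summable fun n => |c n| * ν ^ n) (hcr : ∑' n, |c n| * ν ^ n ≤ r) :
    |∑' n : ℕ, ((n + 1 : ℕ) : ℝ) * c (n + 1) * s (n + 1)|
      ≤ r * (∑ n ∈ Icc 1 N, (n : ℝ) * |s n| + ((ν - 1) * N + ν) / ((ν - 1) ^ 2 * ν ^ N)) := by
  rw [mul_add, mul_sum, sum_Icc_one_eq_sum_range_succ, ← Real.norm_eq_abs]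
  exact norm_tsum_le_sum_range_add_of_hasSum N
    (fun n _ => abs_nat_mul_mul_le_mul_abs hν.le hc hcr (n + 1))
    (fun n => abs_nat_mul_mul_le_div_pow (one_pos.trans hν) hs hc hcr (n + N + 1))
    ((hasSum_nat_div_pow_tail hν N).mul_left r)

end WeightedCoefficients

theorem chebyshev_deriv_tail_estimate_general
    (ν : ℝ) (hν : 1 < ν) (N : ℕ) (r : ℝ)
    (a b : ℕ → ℝ)
    (ha : Summable fun n : ℕ => |a n| * ν ^ n)
    (hbN : ∀ n : ℕ, N < n → b n = 0)
    (hab : ∑' n : ℕ, |a n - b n| * ν ^ n ≤ r)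
    (θ : ℝ) :
    |(∑' n : ℕ, ((n : ℝ) + 1) * a (n + 1) * Real.sin (((n : ℝ) + 1) * θ))
        - ∑ n ∈ Finset.Icc 1 N, (n : ℝ) * b n * Real.sin ((n : ℝ) * θ)|
      ≤ r * ((∑ n ∈ Finset.Icc 1 N, (n : ℝ) * |Real.sin ((n : ℝ) * θ)|)
          + ((ν - 1) * N + ν) / ((ν - 1) ^ 2 * ν ^ N)) := by
  set s : ℕ → ℝ := fun n => Real.sin (n * θ)
  have hs : ∀ n, |s n| ≤ 1 := fun n => Real.abs_sin_le_one _
  have hc : Summable fun n => |a n - b n| * ν ^ n := by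
    refine ha.congr_cofinite ?_
    rw [Nat.cofinite_eq_atTop]
    filter_upwards [Filter.eventually_gt_atTop N] with n hn
    rw [hbN n hn, sub_zero]
  have hb : HasSum (fun n : ℕ => ((n + 1 : ℕ) : ℝ) * b (n + 1) * s (n + 1))
      (∑ n ∈ Icc 1 N, (n : ℝ) * b n * s n) := by
    rw [sum_Icc_one_eq_sum_range_succ]
    exact hasSum_sum_of_ne_finset_zero fun n hn => by
      rw [hbN (n + 1) (by simpa using hn), mul_zero, zero_mul]
  have hdiff : Summable fun n : ℕ => ((n + 1 : ℕ) : ℝ) * (a - b) (n + 1) * s (n + 1) :=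
    (summable_nat_add_iff 1).mpr (summable_nat_mul_mul hν hs hc)
  have hsplit : ∀ n : ℕ, ((n : ℝ) + 1) * a (n + 1) * Real.sin (((n : ℝ) + 1) * θ)
      = ((n + 1 : ℕ) : ℝ) * (a - b) (n + 1) * s (n + 1)
        + ((n + 1 : ℕ) : ℝ) * b (n + 1) * s (n + 1) := by
    intro n
    simp only [s, Pi.sub_apply]
    push_cast
    ring
  rw [tsum_congr hsplit, (hdiff.hasSum.add hb).tsum_eq, add_sub_cancel_right]
  exact abs_tsum_nat_mul_mul_le hν N hs hc hab

/-- Lemma 3.5 of the paper (tail estimate, inequality (69)): if the true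
Chebyshev coefficients `a` are within weighted `ℓ¹` distance `r` of the
polynomial coefficients `b` (supported on degrees `≤ N`), then the derivative
series is controlled. -/
theorem chebyshev_deriv_tail_estimate
    (ν : ℝ) (hν : 1 < ν) (N : ℕ) (r : ℝ) (hr : 0 < r)
    (a b : ℕ → ℝ)
    (ha : Summable fun n : ℕ => |a n| * ν ^ n)
    (hbN : ∀ n : ℕ, N < n → b n = 0)
    (hab : ∑' n : ℕ, |a n - b n| * ν ^ n ≤ r)
    (θ : ℝ) (hθ : θ ∈ Set.Ioo (0 : ℝ) Real.pi) :
    |(∑' n : ℕ, ((n : ℝ) + 1) * a (n + 1) * Real.sin (((n : ℝ) + 1) * θ))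
        - ∑ n ∈ Finset.Icc 1 N, (n : ℝ) * b n * Real.sin ((n : ℝ) * θ)|
      ≤ r * ((∑ n ∈ Finset.Icc 1 N, (n : ℝ) * |Real.sin ((n : ℝ) * θ)|)
          + ((ν - 1) * N + ν) / ((ν - 1) ^ 2 * ν ^ N)) :=
  chebyshev_deriv_tail_estimate_general ν hν N r a b ha hbN hab θ
end
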